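/- arXiv:0910.1491 — 2 statements merged into one kernel-verified Lean document; each statement's English description precedes it below -/
import Mathlib

section
/- Let G be a group with a normal subgroup H such that H is residually finite and G/H is finite. Then G is residually finite. -/
namespace Subgroup

variable {G : Type*} [Group G]

@[to_additive]
instance finiteIndex_map_subtype {H : Subgroup G} [H.FiniteIndex] (K : Subgroup H)
    [K.FiniteIndex] : (K.map H.subtype).FiniteIndex :=
  ⟨by
    rw [index_map_subtype]
    exact mul_ne_zero FiniteIndex.index_ne_zero FiniteIndex.index_ne_zero⟩

end Subgroup

namespace Group

variable {G : Type*} [Group G]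

@[to_additive]
theorem ResiduallyFinite.of_finiteIndex (H : Subgroup G) [H.FiniteIndex] [ResiduallyFinite H] :
    ResiduallyFinite G := by
  rw [residuallyFinite_iff_exists_finiteIndex]
  intro g hg
  by_cases hgH : g ∈ H
  · obtain ⟨K, hK, hgK⟩ := (residuallyFinite_iff_exists_finiteIndex (G := H)).mp ‹_›
      ⟨g, hgH⟩ (by simpa [Subtype.ext_iff] using hg)
    refine ⟨K.map H.subtype, inferInstance, ?_⟩
    rintro ⟨k, hk, hkg⟩
    exact hgK (by rwa [show k = ⟨g, hgH⟩ from Subtype.ext hkg] at hk)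
  · exact ⟨H, inferInstance, hgH⟩

@[to_additive]
theorem ResiduallyFinite.exists_finite_monoidHom_ne_one.{u} [ResiduallyFinite G] {g : G}
    (hg : g ≠ 1) : ∃ (Q : Type u) (_ : Group Q) (_ : Finite Q) (f : G →* Q), f g ≠ 1 := by
  obtain ⟨N, hgN⟩ := exists_finiteIndexNormalSubgroup_notMem g hg
  refine ⟨Shrink.{u} (G ⧸ N.toSubgroup), inferInstance, inferInstance,
    (Shrink.mulEquiv.symm : G ⧸ N.toSubgroup ≃* _).toMonoidHom.comp (QuotientGroup.mk' _), ?_⟩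
  simpa [← FiniteIndexNormalSubgroup.mem_toSubgroup_iff] using hgN

end Group

theorem stmt_5_general (G : Type*) [Group G] (H : Subgroup G)
    (hres : ∀ h : H, h ≠ 1 → ∃ (Q : Type) (_ : Group Q) (_ : Finite Q) (φ : H →* Q), φ h ≠ 1)
    (hfin : Finite (G ⧸ H)) :
    ∀ g : G, g ≠ 1 → ∃ (Q : Type) (_ : Group Q) (_ : Finite Q) (φ : G →* Q), φ g ≠ 1 := by
  have := H.finiteIndex_of_finite_quotient
  have := Group.residuallyFinite_of_forall_exists_finite_monoidHom hres
  have := Group.ResiduallyFinite.of_finiteIndex H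
  exact fun g hg ↦ Group.ResiduallyFinite.exists_finite_monoidHom_ne_one hg

/-- If `H` is a normal subgroup of `G`, `H` is residually finite and `G/H` is finite,
then `G` is residually finite. -/
theorem stmt_5 (G : Type*) [Group G] (H : Subgroup G) (hnorm : H.Normal)
    (hres : ∀ h : H, h ≠ 1 → ∃ (Q : Type) (_ : Group Q) (_ : Finite Q) (φ : H →* Q), φ h ≠ 1)
    (hfin : Finite (G ⧸ H)) :
    ∀ g : G, g ≠ 1 → ∃ (Q : Type) (_ : Group Q) (_ : Finite Q) (φ : G →* Q), φ g ≠ 1 :=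
  stmt_5_general G H hres hfin
end

section
/- By Jordan's theorem, for each n there is a constant f(n) such that every finite subgroup of GL(n,ℂ) has a normal abelian subgroup of index at most f(n). -/
/-!
Average `star g * g` over the finite group and conjugate by the square root of the average: this
makes every element unitary for the operator norm. Among unitaries, if `a` and `b` are within
`2/5` of `1`, then `⁅a, b⁆` is even closer to `1` than `b`; taking `b` as close to `1` as possible
among non-commuting pairs, `c = ⁅a, b⁆` commutes with `b`, so `cᵏ = ⁅a, bᵏ⁆` stays within
`8/5 < √3` of `1` for every `k`. But a unitary `c ≠ 1` has a spectral value `ζ ≠ 1` on the unit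
circle, and some power of `ζ` lies in the arc `Re ≤ -1/2`, at distance `≥ √3` from `1`. Hence the
elements within `2/5` of `1` generate an abelian normal subgroup, and its index is at most the
number of balls of radius `1/5` needed to cover the compact unitary group of `ℂⁿˣⁿ`.
-/

open scoped commutatorElement Matrix.Norms.L2Operator MatrixOrder

open Real in
lemma exists_nat_mul_mem_Icc_of_le_pi {θ : ℝ} (hθ : 0 < θ) (hθπ : θ ≤ π) :
    ∃ k : ℕ, k * θ ∈ Set.Icc (2 * π / 3) (4 * π / 3) := by
  rcases le_or_gt θ (2 * π / 3) with hsmall | hlarge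
  · refine ⟨⌈2 * π / 3 / θ⌉₊, (div_le_iff₀ hθ).1 (Nat.le_ceil _), ?_⟩
    have := mul_lt_mul_of_pos_right
      (Nat.ceil_lt_add_one (show 0 ≤ 2 * π / 3 / θ by positivity)) hθ
    rw [add_mul, div_mul_cancel₀ _ hθ.ne'] at this
    linarith
  · exact ⟨1, by constructor <;> linarith⟩

namespace Real

lemma cos_le_neg_half {x : ℝ} (hx : x ∈ Set.Icc (2 * π / 3) (4 * π / 3)) :
    cos x ≤ -(1 / 2) := by
  have h : |π - x| ≤ π / 3 := abs_le.2 ⟨by linarith [hx.2], by linarith [hx.1]⟩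
  have := cos_le_cos_of_nonneg_of_le_pi (abs_nonneg _) (by linarith [pi_pos]) h
  rw [cos_abs, cos_pi_div_three, cos_pi_sub] at this
  linarith

end Real

namespace Complex

lemma sqrt_three_le_norm_sub_one {z : ℂ} (hz : ‖z‖ = 1) (hre : z.re ≤ -(1 / 2)) :
    √3 ≤ ‖z - 1‖ := by
  have hsq : normSq z = 1 := by rw [← Complex.sq_norm, hz, one_pow]
  have : normSq (z - 1) = 2 - 2 * z.re := by
    rw [normSq_apply] at hsq ⊢
    simp only [sub_re, one_re, sub_im, one_im, sub_zero]
    linarith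
  rw [norm_def, this]
  exact Real.sqrt_le_sqrt (by linarith)

lemma exists_sqrt_three_le_norm_pow_sub_one {ζ : ℂ} (hζ : ‖ζ‖ = 1) (h1 : ζ ≠ 1) :
    ∃ k : ℕ, √3 ≤ ‖ζ ^ k - 1‖ := by
  set θ := ζ.arg
  have hexp : ζ = exp (θ * I) := by
    simpa [hζ] using (norm_mul_exp_arg_mul_I ζ).symm
  have hθ : 0 < |θ| := abs_pos.2 fun h => h1 (by simp [hexp, h])
  obtain ⟨k, hk⟩ := exists_nat_mul_mem_Icc_of_le_pi hθ (abs_arg_le_pi ζ)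
  refine ⟨k, sqrt_three_le_norm_sub_one (by rw [norm_pow, hζ, one_pow]) ?_⟩
  have hre : (ζ ^ k).re = Real.cos (k * |θ|) := by
    rw [hexp, ← exp_nat_mul, ← mul_assoc, ← ofReal_natCast, ← ofReal_mul, exp_ofReal_mul_I_re,
      ← Real.cos_abs, abs_mul, Nat.abs_cast]
  rw [hre]
  exact Real.cos_le_neg_half hk

end Complex

lemma commutatorElement_pow_right_of_commute {G : Type*} [Group G] {a b : G}
    (h : Commute ⁅a, b⁆ b) (k : ℕ) : ⁅a, b ^ k⁆ = ⁅a, b⁆ ^ k := by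
  have hconj : a * b * a⁻¹ = ⁅a, b⁆ * b := by group
  rw [commutatorElement_def, ← conj_pow, hconj, h.mul_pow, mul_inv_cancel_right]

namespace Unitary

section CStarRing

variable {R : Type*} [NormedRing R] [StarRing R] [CStarRing R]

lemma norm_sub_one_le_two (u : unitary R) : ‖(u : R) - 1‖ ≤ 2 := by
  nontriviality R
  calc ‖(u : R) - 1‖ ≤ ‖(u : R)‖ + ‖(1 : R)‖ := norm_sub_le _ _
    _ = 2 := by rw [CStarRing.norm_coe_unitary, norm_one]; norm_num

lemma norm_commutator_sub_one_le (u v : unitary R) :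
    ‖((⁅u, v⁆ : unitary R) : R) - 1‖ ≤ 2 * ‖(u : R) - 1‖ * ‖(v : R) - 1‖ := by
  have hfac : ((⁅u, v⁆ : unitary R) : R) - 1 =
      (((u * v : unitary R) : R) - (v * u : unitary R)) * ((v * u)⁻¹ : unitary R) := by
    rw [sub_mul, ← Submonoid.coe_mul, ← Submonoid.coe_mul, mul_inv_cancel, Submonoid.coe_one,
      commutatorElement_def, mul_inv_rev, ← mul_assoc]
  calc ‖((⁅u, v⁆ : unitary R) : R) - 1‖ = ‖(u * v - v * u : R)‖ := by
        rw [hfac, CStarRing.norm_mul_coe_unitary, Submonoid.coe_mul, Submonoid.coe_mul]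
    _ = ‖((u : R) - 1) * (v - 1) - (v - 1) * (u - 1)‖ := by congr 1; noncomm_ring
    _ ≤ ‖(u : R) - 1‖ * ‖(v : R) - 1‖ + ‖(v : R) - 1‖ * ‖(u : R) - 1‖ :=
        (norm_sub_le _ _).trans (add_le_add (norm_mul_le _ _) (norm_mul_le _ _))
    _ = 2 * ‖(u : R) - 1‖ * ‖(v : R) - 1‖ := by ring

lemma norm_conj_sub_one (w v : unitary R) :
    ‖((w * v * w⁻¹ : unitary R) : R) - 1‖ = ‖(v : R) - 1‖ := by
  have : ((w * v * w⁻¹ : unitary R) : R) - 1 = w * ((v : R) - 1) * (w⁻¹ : unitary R) := by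
    rw [mul_sub, sub_mul, mul_one, ← Submonoid.coe_mul, ← Submonoid.coe_mul, ← Submonoid.coe_mul,
      mul_inv_cancel, Submonoid.coe_one]
  rw [this, CStarRing.norm_mul_coe_unitary, CStarRing.norm_coe_unitary_mul]

lemma norm_inv_mul_sub_one (u v : unitary R) :
    ‖((u⁻¹ * v : unitary R) : R) - 1‖ = ‖(v : R) - u‖ := by
  have : ((u⁻¹ * v : unitary R) : R) - 1 = (u⁻¹ : unitary R) * ((v : R) - u) := by
    rw [mul_sub, ← Submonoid.coe_mul, ← Submonoid.coe_mul, inv_mul_cancel, Submonoid.coe_one]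
  rw [this, CStarRing.norm_coe_unitary_mul]

end CStarRing

variable {A : Type*} [CStarAlgebra A]

lemma exists_sqrt_three_le_norm_pow_sub_one {u : A} (hu : u ∈ unitary A) (h1 : u ≠ 1) :
    ∃ k : ℕ, √3 ≤ ‖u ^ k - 1‖ := by
  nontriviality A
  have : IsStarNormal u := isStarNormal_of_mem_unitary hu
  obtain ⟨ζ, hζ, hζ1⟩ : ∃ ζ ∈ spectrum ℂ u, ζ ≠ 1 := by
    by_contra! h
    exact h1 (CFC.eq_one_of_spectrum_subset_one (R := ℂ) u h)
  obtain ⟨k, hk⟩ := Complex.exists_sqrt_three_le_norm_pow_sub_one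
    (spectrum.norm_eq_one_of_unitary hu hζ) hζ1
  have hmem : ζ ^ k - 1 ∈ spectrum ℂ (u ^ k - 1) := by
    have := spectrum.subset_polynomial_aeval u (Polynomial.X ^ k - 1) ⟨ζ, hζ, rfl⟩
    simpa only [Polynomial.aeval_sub, map_pow, Polynomial.aeval_X, map_one, Polynomial.eval_sub,
      Polynomial.eval_pow, Polynomial.eval_X, Polynomial.eval_one] using this
  exact ⟨k, hk.trans (spectrum.norm_le_norm_of_mem hmem)⟩

lemma commute_of_norm_sub_one_lt {G : Subgroup (unitary A)} [Finite G] {a b : unitary A}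
    (ha : a ∈ G) (hb : b ∈ G) (ha1 : ‖(a : A) - 1‖ < 2 / 5) (hb1 : ‖(b : A) - 1‖ < 2 / 5) :
    Commute a b := by
  by_contra hab
  set S : Set (unitary A × unitary A) := {p | p.1 ∈ G ∧ p.2 ∈ G ∧ ‖(p.1 : A) - 1‖ < 2 / 5 ∧
    ‖(p.2 : A) - 1‖ < 2 / 5 ∧ ¬Commute p.1 p.2}
  have hfin : S.Finite :=
    (Set.toFinite ((G : Set (unitary A)) ×ˢ G)).subset fun p hp => ⟨hp.1, hp.2.1⟩
  obtain ⟨⟨a, b⟩, ⟨ha, hb, ha1, hb1, hab⟩, hmin⟩ :=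
    S.exists_min_image (fun p => ‖(p.2 : A) - 1‖) hfin ⟨(a, b), ha, hb, ha1, hb1, hab⟩
  have hb0 : 0 < ‖(b : A) - 1‖ := by
    refine norm_pos_iff.2 (sub_ne_zero.2 fun h => hab ?_)
    rw [(Subtype.ext h : b = 1)]
    exact Commute.one_right a
  set c := ⁅a, b⁆
  have hc : ‖(c : A) - 1‖ < ‖(b : A) - 1‖ := by
    have := norm_commutator_sub_one_le a b
    nlinarith [norm_nonneg ((a : A) - 1)]
  have hcb : Commute c b := by
    by_contra hcb
    exact (hmin (b, c) ⟨hb, G.mul_mem (G.mul_mem (G.mul_mem ha hb) (G.inv_mem ha)) (G.inv_mem hb),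
      hb1, hc.trans hb1, fun h => hcb h.symm⟩).not_gt hc
  have hc1 : (c : A) ≠ 1 := fun h =>
    hab (commutatorElement_eq_one_iff_mul_comm.1 (Subtype.ext h))
  obtain ⟨k, hk⟩ := exists_sqrt_three_le_norm_pow_sub_one c.2 hc1
  have h35 : (8 / 5 : ℝ) < √3 := by
    rw [Real.lt_sqrt (by norm_num)]; norm_num
  have := norm_commutator_sub_one_le a (b ^ k)
  rw [commutatorElement_pow_right_of_commute hcb, SubmonoidClass.coe_pow] at this
  nlinarith [norm_sub_one_le_two (b ^ k), norm_nonneg ((a : A) - 1)]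

lemma exists_normal_comm_subgroup_index_le {Γ : Type*} [Group Γ] [Finite Γ]
    (ρ : Γ →* unitary A) (hρ : Function.Injective ρ) (T : Finset A)
    (hT : (unitary A : Set A) ⊆ ⋃ t ∈ T, Metric.ball t (1 / 5)) :
    ∃ N : Subgroup Γ, N.Normal ∧ (∀ a b : N, a * b = b * a) ∧ N.index ≤ T.card := by
  set S : Set Γ := {g | ‖(ρ g : A) - 1‖ < 2 / 5}
  have hS : ∀ g, MulAut.conj g '' S ⊆ S := by
    rintro g _ ⟨x, hx, rfl⟩
    simpa only [S, Set.mem_ofPred_eq, MulAut.conj_apply, map_mul, map_inv,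
      norm_conj_sub_one] using hx
  have hcomm : ∀ x ∈ S, ∀ y ∈ S, x * y = y * x := by
    have : Finite ρ.range := Finite.of_surjective _ ρ.rangeRestrict_surjective
    exact fun x hx y hy => hρ <| by
      simpa only [map_mul] using
        (commute_of_norm_sub_one_lt (G := ρ.range) ⟨x, rfl⟩ ⟨y, rfl⟩ hx hy).eq
  refine ⟨Subgroup.closure S, ⟨fun n hn g => ?_⟩,
    isMulCommutative_iff.1 (Subgroup.isMulCommutative_closure hcomm), ?_⟩
  · have : (Subgroup.closure S).map (MulAut.conj g).toMonoidHom ≤ Subgroup.closure S := by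
      rw [MonoidHom.map_closure]
      exact Subgroup.closure_mono (hS g)
    exact this ⟨n, hn, rfl⟩
  · have hcover : ∀ g : Γ, ∃ t ∈ T, dist (ρ g : A) t < 1 / 5 := by
      intro g
      simpa using hT (ρ g).2
    choose t htT ht using hcover
    have hinj : Function.Injective fun q : Γ ⧸ Subgroup.closure S => (⟨t q.out, htT _⟩ : T) := by
      intro q₁ q₂ h
      rw [← q₁.out_eq', ← q₂.out_eq', QuotientGroup.eq]
      apply Subgroup.subset_closure
      have h' : t q₁.out = t q₂.out := congrArg Subtype.val h
      show ‖(ρ (q₁.out⁻¹ * q₂.out) : A) - 1‖ < 2 / 5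
      rw [map_mul, map_inv, norm_inv_mul_sub_one, ← dist_eq_norm]
      linarith [dist_triangle_right (ρ q₂.out : A) (ρ q₁.out) (t q₁.out), ht q₁.out,
        h' ▸ ht q₂.out]
    calc (Subgroup.closure S).index = Nat.card (Γ ⧸ Subgroup.closure S) := rfl
      _ ≤ Nat.card T := Nat.card_le_card_of_injective _ hinj
      _ = T.card := Nat.card_eq_finsetCard T

lemma exists_finset_subset_iUnion_ball [FiniteDimensional ℂ A] {ε : ℝ} (hε : 0 < ε) :
    ∃ T : Finset A, (unitary A : Set A) ⊆ ⋃ t ∈ T, Metric.ball t ε := by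
  have hbdd : Bornology.IsBounded (unitary A : Set A) :=
    (Metric.isBounded_closedBall (x := (0 : A)) (r := 1)).subset fun u hu => by
      nontriviality A
      simpa using (CStarRing.norm_of_mem_unitary hu).le
  have hcompact := Metric.isCompact_of_isClosed_isBounded isClosed_unitary hbdd
  obtain ⟨T, -, hT⟩ :=
    hcompact.elim_nhds_subcover (fun u => Metric.ball u ε) fun u _ => Metric.ball_mem_nhds u hε
  exact ⟨T, hT⟩

end Unitary

namespace Units

variable {A : Type*} [CStarAlgebra A] [PartialOrder A] [StarOrderedRing A]
  {Γ : Type*} [Group Γ] [Finite Γ]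

lemma exists_conj_mem_unitary (ρ : Γ →* Aˣ) :
    ∃ p : Aˣ, ∀ g, ((p * ρ g * p⁻¹ : Aˣ) : A) ∈ unitary A := by
  have : Fintype Γ := Fintype.ofFinite Γ
  set H : A := ∑ g, star (ρ g : A) * ρ g
  have hinv : ∀ g, star (ρ g : A) * H * ρ g = H := fun g => by
    calc star (ρ g : A) * H * ρ g = ∑ h, star (ρ (h * g) : A) * ρ (h * g) := by
          simp only [H, Finset.mul_sum, Finset.sum_mul, map_mul, Units.val_mul, star_mul, mul_assoc]
      _ = H := Fintype.sum_equiv (Equiv.mulRight g) _ _ fun _ => rfl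
  have hH : IsStrictlyPositive H := by
    refine isStrictlyPositive_one.of_le ?_
    simpa using Finset.single_le_sum (fun g _ => star_mul_self_nonneg (ρ g : A))
      (Finset.mem_univ 1)
  obtain ⟨p, hp⟩ := hH.isUnit_cfcSqrt
  have hpp : (p : A) * p = H := hp ▸ CFC.sqrt_mul_sqrt_self H hH.nonneg
  have hstar : star (p : A) = p := hp ▸ (CFC.sqrt_nonneg H).isSelfAdjoint
  refine ⟨p, fun g => (Units.isUnit _).mem_unitary_of_star_mul_self ?_⟩
  calc star ((p * ρ g * p⁻¹ : Aˣ) : A) * (p * ρ g * p⁻¹ : Aˣ)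
      = star (↑p⁻¹ : A) * (star (ρ g : A) * H * ρ g) * ↑p⁻¹ := by
        simp only [Units.val_mul, star_mul, hstar, ← hpp, mul_assoc]
    _ = star (↑p⁻¹ : A) * (p * p) * ↑p⁻¹ := by rw [hinv, hpp]
    _ = star (p * ↑p⁻¹ : A) := by rw [star_mul, hstar, mul_assoc, mul_assoc, p.mul_inv, mul_one]
    _ = 1 := by rw [p.mul_inv, star_one]

lemma exists_injective_hom_unitary (ρ : Γ →* Aˣ) (hρ : Function.Injective ρ) :
    ∃ σ : Γ →* unitary A, Function.Injective σ := by
  obtain ⟨p, hp⟩ := exists_conj_mem_unitary ρ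
  refine ⟨((Units.coeHom A).comp ((MulAut.conj p).toMonoidHom.comp ρ)).codRestrict _ hp,
    fun g h hgh => hρ ?_⟩
  simpa using Units.ext (congrArg Subtype.val hgh)

end Units

/-- Jordan's theorem: for each `n` there is a constant `f n` such that every finite subgroup of
`GL(n,ℂ)` has a normal abelian subgroup of index at most `f n`. -/
theorem stmt_8 :
    ∃ f : ℕ → ℕ, ∀ n : ℕ, ∀ F : Subgroup (Matrix.GeneralLinearGroup (Fin n) ℂ), Finite F →
      ∃ A : Subgroup F, A.Normal ∧ (∀ a b : A, a * b = b * a) ∧ A.index ≤ f n := by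
  choose T hT using fun n => Unitary.exists_finset_subset_iUnion_ball
    (A := Matrix (Fin n) (Fin n) ℂ) (ε := 1 / 5) (by norm_num)
  refine ⟨fun n => (T n).card, fun n F _ => ?_⟩
  obtain ⟨σ, hσ⟩ := Units.exists_injective_hom_unitary F.subtype F.subtype_injective
  exact Unitary.exists_normal_comm_subgroup_index_le σ hσ (T n) (hT n)
end
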